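/- Let f : 𝔻 → ℂ be holomorphic on the open unit disc with f(0) having positive imaginary part and Im f(q) > 0 for all q (i.e. f maps 𝔻 into the upper half-plane). Writing f(q) = ∑_{n≥0} B_n q^n, one has |B_n| ≤ 2·Im(B_0) for all n ≥ 1. -/

import Mathlib

/-!
On the circle `|z - c| = R` the `n`-th Taylor coefficient of `f` is the average of
`(z - c)⁻ⁿ f z`. For `n ≥ 1` the same average with `conj (f z)` in place of `f z` vanishes:
since `conj (z - c) = R² / (z - c)` there, it is `R⁻²ⁿ` times the conjugate of the average of the
holomorphic function `(z - c)ⁿ f z`, which by the mean value property is its value `0` at `c`.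
Subtracting, the coefficient is the average of `(z - c)⁻ⁿ · 2i Im f z`, whose norm is at most
`2 R⁻ⁿ` times the average of `Im f ≥ 0`, that is `2 Im f(c) / Rⁿ`. Finally let `R → 1`.
-/

open Complex Metric Real Set Filter Topology
open scoped ComplexConjugate Nat

theorem Real.norm_circleAverage_le {E : Type*} [NormedAddCommGroup E] [NormedSpace ℝ E]
    (f : ℂ → E) (c : ℂ) (R : ℝ) :
    ‖circleAverage f c R‖ ≤ circleAverage (fun z ↦ ‖f z‖) c R := by
  rw [circleAverage_def, circleAverage_def, norm_smul, smul_eq_mul,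
    Real.norm_of_nonneg (by positivity)]
  gcongr
  exact intervalIntegral.norm_integral_le_integral_norm two_pi_pos.le

section CircleAverage

variable {f : ℂ → ℂ} {c : ℂ} {R : ℝ}

theorem DifferentiableOn.circleAverage_inv_pow_mul_eq_iteratedDeriv_div (hR : 0 < R)
    (hf : DifferentiableOn ℂ f (closedBall c R)) (n : ℕ) :
    circleAverage (fun z ↦ ((z - c) ^ n)⁻¹ * f z) c R = iteratedDeriv n f c / n ! := by
  have hkernel : (fun z ↦ (z - c)⁻¹ • (((z - c) ^ n)⁻¹ * f z)) =
      fun z ↦ (1 / (z - c) ^ (n + 1)) • f z := by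
    funext z
    simp only [smul_eq_mul, one_div, pow_succ, mul_inv]
    ring
  rw [circleAverage_eq_circleIntegral hR.ne', hkernel,
    hf.circleIntegral_one_div_sub_center_pow_smul hR n, smul_smul, smul_eq_mul]
  field_simp

theorem DifferentiableOn.circleAverage_eq_apply_center (hR : 0 < R)
    (hf : DifferentiableOn ℂ f (closedBall c R)) :
    circleAverage f c R = f c := by
  refine DiffContOnCl.circleAverage ?_
  rw [abs_of_pos hR]
  exact (hf.mono closure_ball_subset_closedBall).diffContOnCl

theorem DifferentiableOn.circleAverage_pow_mul_eq_zero (hR : 0 < R)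
    (hf : DifferentiableOn ℂ f (closedBall c R)) {n : ℕ} (hn : n ≠ 0) :
    circleAverage (fun z ↦ (z - c) ^ n * f z) c R = 0 := by
  rw [DifferentiableOn.circleAverage_eq_apply_center hR (by fun_prop)]
  simp [hn]

theorem DifferentiableOn.circleAverage_inv_pow_mul_conj_eq_zero (hR : 0 < R)
    (hf : DifferentiableOn ℂ f (closedBall c R)) {n : ℕ} (hn : n ≠ 0) :
    circleAverage (fun z ↦ ((z - c) ^ n)⁻¹ * conj (f z)) c R = 0 := by
  have hint : CircleIntegrable (fun z ↦ (z - c) ^ n * f z) c R := by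
    have := hf.continuousOn.mono sphere_subset_closedBall
    exact ContinuousOn.circleIntegrable hR.le (by fun_prop)
  calc circleAverage (fun z ↦ ((z - c) ^ n)⁻¹ * conj (f z)) c R
      = circleAverage (fun z ↦ (R ^ (2 * n))⁻¹ • conj ((z - c) ^ n * f z)) c R := by
        refine circleAverage_congr_sphere fun z hz ↦ ?_
        rw [abs_of_pos hR, mem_sphere_iff_norm] at hz
        rw [inv_def, normSq_eq_norm_sq, norm_pow, hz, map_mul, map_pow, Complex.real_smul]
        push_cast
        ring
    _ = (R ^ (2 * n))⁻¹ • conj (circleAverage (fun z ↦ (z - c) ^ n * f z) c R) := by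
        rw [circleAverage_fun_smul]
        congr 1
        exact conjCLE.toContinuousLinearMap.circleAverage_comp_comm hint
    _ = 0 := by simp [hf.circleAverage_pow_mul_eq_zero hR hn]

theorem DifferentiableOn.circleAverage_im_eq_im_apply_center (hR : 0 < R)
    (hf : DifferentiableOn ℂ f (closedBall c R)) :
    circleAverage (fun z ↦ (f z).im) c R = (f c).im := by
  have hint : CircleIntegrable f c R :=
    (hf.continuousOn.mono sphere_subset_closedBall).circleIntegrable hR.le
  rw [← hf.circleAverage_eq_apply_center hR]
  exact imCLM.circleAverage_comp_comm hint

theorem DifferentiableOn.norm_iteratedDeriv_div_factorial_le_of_im_nonneg (hR : 0 < R)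
    (hf : DifferentiableOn ℂ f (closedBall c R)) (him : ∀ z ∈ sphere c R, 0 ≤ (f z).im)
    {n : ℕ} (hn : n ≠ 0) :
    ‖iteratedDeriv n f c / (n ! : ℂ)‖ ≤ 2 * (f c).im / R ^ n := by
  have hcont := hf.continuousOn.mono sphere_subset_closedBall
  have hne : ∀ z ∈ sphere c R, (z - c) ^ n ≠ 0 := fun z hz ↦
    pow_ne_zero _ (sub_ne_zero.2 (ne_of_mem_sphere hz hR.ne'))
  have hint : CircleIntegrable (fun z ↦ ((z - c) ^ n)⁻¹ * f z) c R :=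
    ContinuousOn.circleIntegrable hR.le (by fun_prop (disch := exact hne))
  have hint' : CircleIntegrable (fun z ↦ ((z - c) ^ n)⁻¹ * conj (f z)) c R :=
    ContinuousOn.circleIntegrable hR.le (by fun_prop (disch := exact hne))
  calc ‖iteratedDeriv n f c / (n ! : ℂ)‖
      = ‖circleAverage (fun z ↦ ((z - c) ^ n)⁻¹ * (f z - conj (f z))) c R‖ := by
        simp_rw [mul_sub]
        rw [circleAverage_fun_sub hint hint', hf.circleAverage_inv_pow_mul_conj_eq_zero hR hn,
          sub_zero, hf.circleAverage_inv_pow_mul_eq_iteratedDeriv_div hR]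
    _ ≤ circleAverage (fun z ↦ ‖((z - c) ^ n)⁻¹ * (f z - conj (f z))‖) c R :=
        norm_circleAverage_le _ _ _
    _ = circleAverage (fun z ↦ (2 / R ^ n) • (f z).im) c R := by
        refine circleAverage_congr_sphere fun z hz ↦ ?_
        rw [abs_of_pos hR] at hz
        rw [norm_mul, norm_inv, norm_pow, mem_sphere_iff_norm.1 hz, sub_conj, norm_mul,
          norm_I, mul_one, norm_real, Real.norm_of_nonneg (by linarith [him z hz]), smul_eq_mul]
        ring
    _ = 2 * (f c).im / R ^ n := by
        rw [circleAverage_fun_smul, hf.circleAverage_im_eq_im_apply_center hR, smul_eq_mul]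
        ring

end CircleAverage

theorem stmt_1 (f : ℂ → ℂ)
    (hhol : DifferentiableOn ℂ f (Metric.ball (0 : ℂ) 1))
    (him : ∀ q ∈ Metric.ball (0 : ℂ) 1, 0 < (f q).im) :
    ∀ n : ℕ, 1 ≤ n → ‖iteratedDeriv n f 0 / ((Nat.factorial n : ℕ) : ℂ)‖ ≤ 2 * (f 0).im := by
  intro n hn
  have hbound : ∀ r ∈ Ioo (0 : ℝ) 1, ‖iteratedDeriv n f 0 / (n ! : ℂ)‖ ≤ 2 * (f 0).im / r ^ n :=
    fun r ⟨hr₀, hr₁⟩ ↦ (hhol.mono (closedBall_subset_ball hr₁))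
      |>.norm_iteratedDeriv_div_factorial_le_of_im_nonneg hr₀
        (fun z hz ↦ (him z (sphere_subset_ball hr₁ hz)).le) (by omega)
  have hlim : Tendsto (fun r : ℝ ↦ 2 * (f 0).im / r ^ n) (𝓝[<] 1) (𝓝 (2 * (f 0).im)) := by
    have hcont : ContinuousAt (fun r : ℝ ↦ 2 * (f 0).im / r ^ n) 1 := by fun_prop (disch := simp)
    simpa using hcont.tendsto.mono_left nhdsWithin_le_nhds
  exact ge_of_tendsto hlim (Filter.mem_of_superset (Ioo_mem_nhdsLT zero_lt_one) hbound)
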